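/- Let a, b, c, d ∈ ℚ, suppose f(x) = x⁴ + a·x³ + b·x² + c·x + d is irreducible over ℚ, and suppose f(x²) = x⁸ + a·x⁶ + b·x⁴ + c·x² + d is reducible over ℚ. Then there exist n, x₀ ∈ ℚ such that d = n² and x₀⁴ − (2b + 12n)·x₀² + (8c + 8an)·x₀ + (b² − 4ac − 4bn + 4n²) = 0. -/

import Mathlib

/-!
Let `g` be a monic irreducible factor of the reducible polynomial `f(x²)`. Up to sign,
`g(x)g(-x)` is even, hence equal to `G(x²)` with `G` monic, and `G ∣ f²`. As `f` is irreducible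
and `deg G = deg g < 2 deg f`, this forces `G = f`, i.e. `f(x²) = g(x)g(-x)`. Writing
`g = x⁴ + px³ + qx² + rx + s` and comparing coefficients gives `d = s²`, and `x₀ = q` is then a
root of the stated quartic with `n = s`.
-/

open Polynomial

namespace Polynomial

section CommRing

variable {R : Type*} [CommRing R]

theorem coeff_comp_neg_X (p : R[X]) (n : ℕ) : (p.comp (-X)).coeff n = (-1) ^ n * p.coeff n := by
  rw [← neg_one_mul (X : R[X]), ← C_1, ← C_neg, comp_C_mul_X_coeff, mul_comm]

theorem expand_two_comp_neg_X (f : R[X]) : (expand R 2 f).comp (-X) = expand R 2 f := by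
  rw [expand_eq_comp_X_pow, comp_assoc, pow_comp, X_comp, neg_sq]

theorem expand_contract_two_of_comp_neg_X_eq [NoZeroDivisors R] [NeZero (2 : R)] {h : R[X]}
    (heven : h.comp (-X) = h) : expand R 2 (contract 2 h) = h := by
  ext n
  rw [coeff_expand two_pos, coeff_contract two_ne_zero]
  split_ifs with hn
  · rw [Nat.div_mul_cancel hn]
  · have hodd : Odd n := Nat.odd_iff.2 (Nat.two_dvd_ne_zero.1 hn)
    have h2 : (2 : R) * h.coeff n = 0 := by
      have := congrArg (coeff · n) heven
      simp only [coeff_comp_neg_X, hodd.neg_one_pow] at this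
      linear_combination -this
    exact ((mul_eq_zero.1 h2).resolve_left two_ne_zero).symm

end CommRing

theorem expand_dvd_expand_iff {R : Type*} [CommSemiring R] {p : ℕ} (hp : p ≠ 0) {f g : R[X]} :
    expand R p f ∣ expand R p g ↔ f ∣ g := by
  refine ⟨fun ⟨k, hk⟩ ↦ ⟨contract p k, ?_⟩, _root_.map_dvd (expand R p)⟩
  rw [← contract_expand p (f := g) hp, hk, mul_comm, contract_mul_expand hp, mul_comm]

section Field

variable {K : Type*} [Field K]

theorem Irreducible.exists_monic_mul_comp_neg_X_eq_expand_two [NeZero (2 : K)] {f : K[X]}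
    (hf : Irreducible f) (hfm : f.Monic) (hred : ¬Irreducible (expand K 2 f)) :
    ∃ g : K[X], g.Monic ∧ g.natDegree = f.natDegree ∧
      g * ((-1) ^ g.natDegree * g.comp (-X)) = expand K 2 f := by
  set F := expand K 2 f
  have hFm : F.Monic := (monic_expand_iff two_pos).2 hfm
  have hFdeg : F.natDegree = f.natDegree * 2 := natDegree_expand 2 f
  obtain ⟨g, hgm, hgirr, hgF⟩ := exists_monic_irreducible_factor F <|
    not_isUnit_of_natDegree_pos F (by rw [hFdeg]; have := hf.natDegree_pos; omega)
  have hglt : g.natDegree < F.natDegree := lt_of_not_ge fun hle ↦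
    hred (eq_of_monic_of_dvd_of_natDegree_le hgm hFm hgF hle ▸ hgirr)
  set g' := (-1) ^ g.natDegree * g.comp (-X)
  have hg'm : g'.Monic := hgm.neg_one_pow_natDegree_mul_comp_neg_X
  have hg'deg : g'.natDegree = g.natDegree := by
    rw [natDegree_mul (by simp) (by simp [hgm.ne_zero])]
    simp [natDegree_comp]
  have hg'F : g' ∣ F :=
    (isUnit_neg_one.pow _).mul_left_dvd.2 <|
      (dvd_comp_neg_X_iff g F).1 (by rwa [expand_two_comp_neg_X])
  obtain ⟨G, hG⟩ : ∃ G, expand K 2 G = g * g' := by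
    refine ⟨_, expand_contract_two_of_comp_neg_X_eq ?_⟩
    simp only [g', mul_comp, pow_comp, neg_comp, one_comp, comp_neg_X_comp_neg_X]
    ring
  have hGm : G.Monic := (monic_expand_iff two_pos).1 (hG ▸ hgm.mul hg'm)
  have hGdeg : G.natDegree = g.natDegree := by
    have := natDegree_expand 2 G
    rw [hG, hgm.natDegree_mul hg'm, hg'deg] at this
    omega
  have hGf : G ∣ f ^ 2 := by
    rw [← expand_dvd_expand_iff two_ne_zero, hG, map_pow, sq]
    exact mul_dvd_mul hgF hg'F
  obtain ⟨i, hi, hGi⟩ := (dvd_prime_pow hf.prime 2).1 hGf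
  have hGi' : G = f ^ i := eq_of_monic_of_associated hGm (hfm.pow i) hGi
  interval_cases i
  · have := hgirr.natDegree_pos
    rw [hGi', pow_zero, natDegree_one] at hGdeg
    omega
  · exact ⟨g, hgm, by rw [← hGdeg, hGi', pow_one], by rw [← hG, hGi', pow_one]⟩
  · rw [hGi', hfm.natDegree_pow] at hGdeg
    omega

end Field

section Quartic

variable {R : Type*} [CommRing R]

theorem X_pow_four_add_eq_iff {a b c d a' b' c' d' : R} :
    (X ^ 4 + C a * X ^ 3 + C b * X ^ 2 + C c * X + C d : R[X]) =
        X ^ 4 + C a' * X ^ 3 + C b' * X ^ 2 + C c' * X + C d' ↔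
      a = a' ∧ b = b' ∧ c = c' ∧ d = d' := by
  refine ⟨fun h ↦ ⟨?_, ?_, ?_, ?_⟩, fun ⟨ha, hb, hc, hd⟩ ↦ by rw [ha, hb, hc, hd]⟩
  · simpa using congrArg (coeff · 3) h
  · simpa using congrArg (coeff · 2) h
  · simpa using congrArg (coeff · 1) h
  · simpa using congrArg (coeff · 0) h

theorem Monic.eq_X_pow_four_add {g : R[X]} (hg : g.Monic) (h4 : g.natDegree = 4) :
    g = X ^ 4 + C (g.coeff 3) * X ^ 3 + C (g.coeff 2) * X ^ 2 + C (g.coeff 1) * X +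
      C (g.coeff 0) := by
  conv_lhs => rw [hg.as_sum, h4]
  simp only [Finset.sum_range_succ, Finset.sum_range_zero]
  ring

theorem X_pow_four_add_mul_comp_neg_X (p q r s : R) :
    (X ^ 4 + C p * X ^ 3 + C q * X ^ 2 + C r * X + C s : R[X]) *
        (X ^ 4 + C p * X ^ 3 + C q * X ^ 2 + C r * X + C s).comp (-X) =
      expand R 2 (X ^ 4 + C (2 * q - p ^ 2) * X ^ 3 + C (q ^ 2 + 2 * s - 2 * p * r) * X ^ 2 +
        C (2 * q * s - r ^ 2) * X + C (s ^ 2)) := by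
  simp only [add_comp, mul_comp, pow_comp, X_comp, C_comp, map_add, map_mul, map_pow, expand_X,
    expand_C, map_sub, map_ofNat]
  ring

end Quartic

end Polynomial

theorem stmt2 (a b c d : ℚ)
    (hf : Irreducible (X ^ 4 + C a * X ^ 3 + C b * X ^ 2 + C c * X + C d : ℚ[X]))
    (hred : ¬ Irreducible (X ^ 8 + C a * X ^ 6 + C b * X ^ 4 + C c * X ^ 2 + C d : ℚ[X])) :
    ∃ n x₀ : ℚ, d = n ^ 2 ∧
      x₀ ^ 4 - (2 * b + 12 * n) * x₀ ^ 2 + (8 * c + 8 * a * n) * x₀ +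
        (b ^ 2 - 4 * a * c - 4 * b * n + 4 * n ^ 2) = 0 := by
  set f : ℚ[X] := X ^ 4 + C a * X ^ 3 + C b * X ^ 2 + C c * X + C d
  have hfm : f.Monic := by unfold f; monicity!
  have hf4 : f.natDegree = 4 := by unfold f; compute_degree!
  have hF : X ^ 8 + C a * X ^ 6 + C b * X ^ 4 + C c * X ^ 2 + C d = expand ℚ 2 f := by
    simp only [f, map_add, map_mul, map_pow, expand_X, expand_C]
    ring
  rw [hF] at hred
  obtain ⟨g, hgm, hg4, hgf⟩ := hf.exists_monic_mul_comp_neg_X_eq_expand_two hfm hred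
  rw [hf4] at hg4
  rw [hg4, show (-1 : ℚ[X]) ^ 4 = 1 by norm_num, one_mul, hgm.eq_X_pow_four_add hg4,
    X_pow_four_add_mul_comp_neg_X, expand_inj two_pos, X_pow_four_add_eq_iff] at hgf
  obtain ⟨rfl, rfl, rfl, rfl⟩ := hgf
  exact ⟨g.coeff 0, g.coeff 2, rfl, by ring⟩
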